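/- arXiv:0804.4314 — 7 statements merged into one kernel-verified Lean document; each statement's English description precedes it below -/
import Mathlib

section
/- Let v : ℝ → ℝ be continuous, let L > 0 and T > 0, and let f : [0, T] → ℝ be a measurable function with |f(t)| ≤ L for all t ∈ [0, T] and ∫₀ᵀ f(t) dt = 0. Then there exist real numbers M, N ∈ [−L, L] and d ∈ [0, 1] such that d·M + (1 − d)·N = 0 and T·(d·v(M) + (1 − d)·v(N)) ≥ ∫₀ᵀ v(f(t)) dt. In other words, among all zero-mean forces bounded by L, a dichotomous force (taking only the two values M and N, with duty cycle d) achieves at least as large an average adiabatic ratchet velocity (1/T)∫₀ᵀ v(f(t)) dt as f does. -/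
open Set MeasureTheory

/-- Among all zero-mean forces bounded by `L`, a dichotomous force achieves at least
as large an average adiabatic ratchet velocity as `f` does. -/
theorem dichotomous_maximises (v : ℝ → ℝ) (hv : Continuous v)
    (L T : ℝ) (hL : 0 < L) (hT : 0 < T)
    (f : ℝ → ℝ) (hf : Measurable f)
    (hbound : ∀ t ∈ Set.Icc (0 : ℝ) T, |f t| ≤ L)
    (hmean : ∫ t in (0:ℝ)..T, f t = 0) :
    ∃ M N d : ℝ, M ∈ Set.Icc (-L) L ∧ N ∈ Set.Icc (-L) L ∧ d ∈ Set.Icc (0:ℝ) 1 ∧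
      d * M + (1 - d) * N = 0 ∧
      T * (d * v M + (1 - d) * v N) ≥ ∫ t in (0:ℝ)..T, v (f t) := by
  classical
  -- the admissible compact set of dichotomous parameters
  set K : Set (ℝ × ℝ × ℝ) :=
    {p | p.1 ∈ Icc (-L) L ∧ p.2.1 ∈ Icc (-L) L ∧ p.2.2 ∈ Icc (0:ℝ) 1 ∧
      p.2.2 * p.1 + (1 - p.2.2) * p.2.1 = 0} with hKdef
  have hKne : K.Nonempty := by
    refine ⟨(0, 0, 0), ⟨?_, ?_, ?_, ?_⟩⟩ <;> simp <;> linarith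
  have hKclosed : IsClosed K := by
    have h1 : IsClosed {p : ℝ × ℝ × ℝ | p.1 ∈ Icc (-L) L} :=
      isClosed_Icc.preimage continuous_fst
    have h2 : IsClosed {p : ℝ × ℝ × ℝ | p.2.1 ∈ Icc (-L) L} :=
      isClosed_Icc.preimage (continuous_fst.comp continuous_snd)
    have h3 : IsClosed {p : ℝ × ℝ × ℝ | p.2.2 ∈ Icc (0:ℝ) 1} :=
      isClosed_Icc.preimage (continuous_snd.comp continuous_snd)
    have h4 : IsClosed {p : ℝ × ℝ × ℝ | p.2.2 * p.1 + (1 - p.2.2) * p.2.1 = 0} := by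
      apply isClosed_eq _ continuous_const
      fun_prop
    exact h1.inter (h2.inter (h3.inter h4))
  have hKcompact : IsCompact K :=
    ((isCompact_Icc.prod (isCompact_Icc.prod isCompact_Icc)).of_isClosed_subset hKclosed
      (fun p hp => ⟨hp.1, hp.2.1, hp.2.2.1⟩))
  -- maximise the dichotomous value
  have hφcont : Continuous (fun p : ℝ × ℝ × ℝ => p.2.2 * v p.1 + (1 - p.2.2) * v p.2.1) := by
    fun_prop
  obtain ⟨p₀, hp₀K, hp₀max⟩ := hKcompact.exists_isMaxOn hKne hφcont.continuousOn
  obtain ⟨M₀, N₀, d₀⟩ := p₀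
  obtain ⟨Sig, hSigdef⟩ : ∃ s : ℝ, s = d₀ * v M₀ + (1 - d₀) * v N₀ := ⟨_, rfl⟩
  have hmax : ∀ M N d : ℝ, M ∈ Icc (-L) L → N ∈ Icc (-L) L → d ∈ Icc (0:ℝ) 1 →
      d * M + (1 - d) * N = 0 → d * v M + (1 - d) * v N ≤ Sig := by
    intro M N d hM hN hd heq
    rw [hSigdef]
    exact hp₀max (⟨hM, hN, hd, heq⟩ : (M, N, d) ∈ K)
  have hv0 : v 0 ≤ Sig := by
    have := hmax 0 0 1 ⟨by linarith, by linarith⟩ ⟨by linarith, by linarith⟩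
      ⟨by norm_num, le_refl _⟩ (by ring)
    linarith
  -- cross inequality between positive and negative points
  have hcross : ∀ x ∈ Ioc (0:ℝ) L, ∀ y ∈ Ico (-L) (0:ℝ),
      (v x - Sig) / x ≤ (v y - Sig) / y := by
    intro x hx y hy
    have hx0 : 0 < x := hx.1
    have hy0 : y < 0 := hy.2
    have hxy : 0 < x - y := by linarith
    obtain ⟨d, hddef⟩ : ∃ d : ℝ, d = -y / (x - y) := ⟨_, rfl⟩
    have hd0 : 0 ≤ d := hddef ▸ div_nonneg (by linarith) hxy.le
    have hd1 : d ≤ 1 := by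
      rw [hddef, div_le_one hxy]; linarith
    have hdx : d * (x - y) = -y := by
      rw [hddef]; exact div_mul_cancel₀ _ hxy.ne'
    have hdx' : (1 - d) * (x - y) = x := by
      rw [hddef, sub_mul, one_mul, div_mul_cancel₀ _ hxy.ne']; ring
    have hzero : d * x + (1 - d) * y = 0 := by
      have h5 : (d * x + (1 - d) * y) * (x - y) = 0 := by
        have : (d * x + (1 - d) * y) * (x - y)
            = x * (d * (x - y)) + y * ((1 - d) * (x - y)) := by ring
        rw [this, hdx, hdx']; ring
      rcases mul_eq_zero.mp h5 with h | h
      · exact h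
      · exact absurd h hxy.ne'
    have hval : d * v x + (1 - d) * v y ≤ Sig :=
      hmax x y d ⟨by linarith, hx.2⟩ ⟨hy.1, by linarith⟩ ⟨hd0, hd1⟩ hzero
    have key : (-y) * v x + x * v y ≤ Sig * (x - y) := by
      have hmul := mul_le_mul_of_nonneg_right hval hxy.le
      have hexp : (d * v x + (1 - d) * v y) * (x - y)
          = (-y) * v x + x * v y := by
        have : (d * v x + (1 - d) * v y) * (x - y)
            = v x * (d * (x - y)) + v y * ((1 - d) * (x - y)) := by ring
        rw [this, hdx, hdx']; ring
      rw [hexp] at hmul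
      exact hmul
    have hnum : x * v y - y * v x - Sig * (x - y) ≤ 0 := by linarith
    have hden : x * y < 0 := mul_neg_of_pos_of_neg hx0 hy0
    have heq2 : (v y - Sig) / y - (v x - Sig) / x
        = (x * v y - y * v x - Sig * (x - y)) / (x * y) := by
      rw [div_sub_div _ _ hy0.ne hx0.ne', mul_comm y x]
      congr 1
      ring
    have hpos : 0 ≤ (v y - Sig) / y - (v x - Sig) / x := by
      rw [heq2]
      have h6 := div_nonneg (neg_nonneg.mpr hnum) (neg_nonneg.mpr hden.le)
      rwa [neg_div_neg_eq] at h6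
    linarith
  -- the supporting slope
  set S : Set ℝ := (fun x => (v x - Sig) / x) '' Ioc (0:ℝ) L with hSdef
  have hSne : S.Nonempty := ⟨_, ⟨L, ⟨hL, le_refl _⟩, rfl⟩⟩
  have hSbdd : BddAbove S := by
    refine ⟨(v (-L) - Sig) / (-L), ?_⟩
    rintro s ⟨x, hx, rfl⟩
    exact hcross x hx (-L) ⟨le_refl _, by linarith⟩
  set a : ℝ := sSup S with hadef
  have haup : ∀ x ∈ Ioc (0:ℝ) L, (v x - Sig) / x ≤ a :=
    fun x hx => le_csSup hSbdd ⟨x, hx, rfl⟩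
  have halo : ∀ y ∈ Ico (-L) (0:ℝ), a ≤ (v y - Sig) / y := by
    intro y hy
    refine csSup_le hSne ?_
    rintro s ⟨x, hx, rfl⟩
    exact hcross x hx y hy
  -- affine majorant
  have hmaj : ∀ x ∈ Icc (-L) L, v x ≤ Sig + a * x := by
    intro x hx
    rcases lt_trichotomy x 0 with h | h | h
    · have := halo x ⟨hx.1, h⟩
      have h2 := (le_div_iff_of_neg h).mp this
      linarith
    · subst h; simpa using hv0
    · have := haup x ⟨h, hx.2⟩
      have h2 := (div_le_iff₀ h).mp this
      linarith
  -- integrate the majorant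
  obtain ⟨C, hC⟩ := isCompact_Icc.exists_bound_of_continuousOn
    (s := Icc (-L) L) hv.continuousOn
  have hfmem : ∀ t ∈ Icc (0:ℝ) T, f t ∈ Icc (-L) L := by
    intro t ht
    have := abs_le.mp (hbound t ht)
    exact ⟨this.1, this.2⟩
  have hintf : IntervalIntegrable f volume 0 T := by
    rw [intervalIntegrable_iff_integrableOn_Ioc_of_le hT.le]
    refine Integrable.mono' (integrable_const L) hf.aestronglyMeasurable ?_
    rw [ae_restrict_iff' measurableSet_Ioc]
    filter_upwards with t ht
    exact (hbound t (Ioc_subset_Icc_self ht))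
  have hint1 : IntervalIntegrable (fun t => v (f t)) volume 0 T := by
    rw [intervalIntegrable_iff_integrableOn_Ioc_of_le hT.le]
    refine Integrable.mono' (integrable_const C) (hv.measurable.comp hf).aestronglyMeasurable ?_
    rw [ae_restrict_iff' measurableSet_Ioc]
    filter_upwards with t ht
    exact hC _ (hfmem t (Ioc_subset_Icc_self ht))
  have hint2 : IntervalIntegrable (fun t => Sig + a * f t) volume 0 T :=
    (intervalIntegrable_const).add (hintf.const_mul a)
  have hmono : (∫ t in (0:ℝ)..T, v (f t)) ≤ ∫ t in (0:ℝ)..T, (Sig + a * f t) := by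
    refine intervalIntegral.integral_mono_on hT.le hint1 hint2 ?_
    intro t ht
    exact hmaj (f t) (hfmem t ht)
  have hrhs : (∫ t in (0:ℝ)..T, (Sig + a * f t)) = T * Sig := by
    rw [intervalIntegral.integral_add intervalIntegrable_const (hintf.const_mul a),
      intervalIntegral.integral_const, intervalIntegral.integral_const_mul, hmean]
    simp [mul_comm]
  refine ⟨M₀, N₀, d₀, hp₀K.1, hp₀K.2.1, hp₀K.2.2.1, hp₀K.2.2.2, ?_⟩
  rw [ge_iff_le]
  calc (∫ t in (0:ℝ)..T, v (f t)) ≤ ∫ t in (0:ℝ)..T, (Sig + a * f t) := hmono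
    _ = T * Sig := hrhs
    _ = T * (d₀ * v M₀ + (1 - d₀) * v N₀) := by rw [hSigdef]
end

section
/- Let v : ℝ → ℝ be continuous, let L > 0 and T > 0, and let f : [0, T] → ℝ be a measurable function with |f(t)| ≤ L for all t ∈ [0, T] and ∫₀ᵀ f(t) dt = 0. Then there exist real numbers M, N ∈ [−L, L] and d ∈ [0, 1] such that d·M + (1 − d)·N = 0 and T·(d·v(M) + (1 − d)·v(N)) ≤ ∫₀ᵀ v(f(t)) dt. In other words, a dichotomous zero-mean force achieves an average adiabatic ratchet velocity at least as negative as that of f. -/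
open Set MeasureTheory

private lemma inf_attained (v : ℝ → ℝ) (hv : Continuous v) (K : Set ℝ) (hK : IsCompact K)
    (hne : K.Nonempty) (a : ℝ) :
    ∃ x ∈ K, sInf ((fun x => v x - a * x) '' K) = v x - a * x :=
  hK.exists_sInf_image_eq hne ((hv.sub (continuous_const.mul continuous_id)).continuousOn)

private lemma inf_le_of_mem (v : ℝ → ℝ) (hv : Continuous v) (K : Set ℝ) (hK : IsCompact K)
    (a x : ℝ) (hx : x ∈ K) :
    sInf ((fun x => v x - a * x) '' K) ≤ v x - a * x :=
  csInf_le ((hK.image_of_continuousOn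
    ((hv.sub (continuous_const.mul continuous_id)).continuousOn)).bddBelow) ⟨x, hx, rfl⟩

private lemma inf_lip (v : ℝ → ℝ) (hv : Continuous v) (K : Set ℝ) (hK : IsCompact K)
    (hne : K.Nonempty) (C : ℝ) (hC : ∀ x ∈ K, |x| ≤ C) (a a' : ℝ) :
    sInf ((fun x => v x - a * x) '' K) ≤ sInf ((fun x => v x - a' * x) '' K) + C * |a - a'| := by
  obtain ⟨x, hx, hval⟩ := inf_attained v hv K hK hne a'
  have h1 : sInf ((fun x => v x - a * x) '' K) ≤ v x - a * x :=
    inf_le_of_mem v hv K hK a x hx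
  have h2 : (a' - a) * x ≤ C * |a - a'| := by
    calc (a' - a) * x ≤ |(a' - a) * x| := le_abs_self _
      _ = |a - a'| * |x| := by rw [abs_mul, abs_sub_comm]
      _ ≤ |a - a'| * C := by
          exact mul_le_mul_of_nonneg_left (hC x hx) (abs_nonneg _)
      _ = C * |a - a'| := mul_comm _ _
  rw [hval]; nlinarith [h1]

private lemma inf_lipschitz (v : ℝ → ℝ) (hv : Continuous v) (K : Set ℝ) (hK : IsCompact K)
    (hne : K.Nonempty) (C : ℝ) (hC0 : 0 ≤ C) (hC : ∀ x ∈ K, |x| ≤ C) :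
    LipschitzWith C.toNNReal (fun a => sInf ((fun x => v x - a * x) '' K)) := by
  apply LipschitzWith.of_dist_le_mul
  intro a b
  rw [Real.dist_eq, Real.dist_eq, Real.coe_toNNReal _ hC0, abs_sub_le_iff]
  constructor
  · have := inf_lip v hv K hK hne C hC a b; linarith
  · have := inf_lip v hv K hK hne C hC b a
    rw [abs_sub_comm] at this; linarith

/-- Among all zero-mean forces bounded by `L`, a dichotomous force achieves an average
adiabatic ratchet velocity at least as negative as that of `f`. -/
theorem dichotomous_minimises (v : ℝ → ℝ) (hv : Continuous v)
    (L T : ℝ) (hL : 0 < L) (hT : 0 < T)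
    (f : ℝ → ℝ) (hf : Measurable f)
    (hbound : ∀ t ∈ Set.Icc (0 : ℝ) T, |f t| ≤ L)
    (hmean : ∫ t in (0:ℝ)..T, f t = 0) :
    ∃ M N d : ℝ, M ∈ Set.Icc (-L) L ∧ N ∈ Set.Icc (-L) L ∧ d ∈ Set.Icc (0:ℝ) 1 ∧
      d * M + (1 - d) * N = 0 ∧
      T * (d * v M + (1 - d) * v N) ≤ ∫ t in (0:ℝ)..T, v (f t) := by
  have hL0 : -L ≤ (0:ℝ) := by linarith
  have h0L : (0:ℝ) ≤ L := hL.le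
  -- the two half intervals
  have hKm : IsCompact (Icc (-L) (0:ℝ)) := isCompact_Icc
  have hKp : IsCompact (Icc (0:ℝ) L) := isCompact_Icc
  have hnem : (Icc (-L) (0:ℝ)).Nonempty := ⟨0, by simp [hL0]⟩
  have hnep : (Icc (0:ℝ) L).Nonempty := ⟨0, by simp [h0L]⟩
  have hCm : ∀ x ∈ Icc (-L) (0:ℝ), |x| ≤ L := fun x hx => abs_le.2 ⟨hx.1, le_trans hx.2 h0L⟩
  have hCp : ∀ x ∈ Icc (0:ℝ) L, |x| ≤ L := fun x hx => abs_le.2 ⟨le_trans hL0 hx.1, hx.2⟩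
  set φ : ℝ → ℝ := fun a => sInf ((fun x => v x - a * x) '' Icc (-L) 0) with hφ
  set ψ : ℝ → ℝ := fun a => sInf ((fun x => v x - a * x) '' Icc 0 L) with hψ
  have hφc : Continuous φ := (inf_lipschitz v hv _ hKm hnem L h0L hCm).continuous
  have hψc : Continuous ψ := (inf_lipschitz v hv _ hKp hnep L h0L hCp).continuous
  -- lower bound for v on [-L, L]
  obtain ⟨x₀, hx₀, hmin⟩ := isCompact_Icc.exists_isMinOn (⟨0, by simp [hL0, h0L]⟩ :
    (Icc (-L) L).Nonempty) hv.continuousOn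
  set B : ℝ := v x₀ with hB
  have hBle : ∀ y ∈ Icc (-L) L, B ≤ v y := fun y hy => hmin hy
  -- choose a₁ large enough
  set a₁ : ℝ := max 0 ((v L - B) / L) with ha₁
  have ha₁0 : 0 ≤ a₁ := le_max_left _ _
  have hφa₁ : B ≤ φ a₁ := by
    apply le_csInf (hnem.image _)
    rintro y ⟨x, hx, rfl⟩
    show B ≤ v x - a₁ * x
    have h1 : B ≤ v x := hBle x ⟨hx.1, le_trans hx.2 h0L⟩
    have h2 : a₁ * x ≤ 0 := mul_nonpos_of_nonneg_of_nonpos ha₁0 hx.2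
    linarith
  have hψa₁ : ψ a₁ ≤ B := by
    have h1 : ψ a₁ ≤ v L - a₁ * L := inf_le_of_mem v hv _ hKp a₁ L ⟨h0L, le_refl _⟩
    have h2 : (v L - B) / L ≤ a₁ := le_max_right _ _
    have h3 : v L - B ≤ a₁ * L := by
      rw [div_le_iff₀ hL] at h2; linarith [h2]
    linarith
  -- choose a₀ small enough
  set a₀ : ℝ := min 0 ((B - v (-L)) / L) with ha₀
  have ha₀0 : a₀ ≤ 0 := min_le_left _ _
  have hψa₀ : B ≤ ψ a₀ := by
    apply le_csInf (hnep.image _)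
    rintro y ⟨x, hx, rfl⟩
    show B ≤ v x - a₀ * x
    have h1 : B ≤ v x := hBle x ⟨le_trans hL0 hx.1, hx.2⟩
    have h2 : a₀ * x ≤ 0 := mul_nonpos_of_nonpos_of_nonneg ha₀0 hx.1
    linarith
  have hφa₀ : φ a₀ ≤ B := by
    have h1 : φ a₀ ≤ v (-L) - a₀ * (-L) :=
      inf_le_of_mem v hv _ hKm a₀ (-L) ⟨le_refl _, hL0⟩
    have h2 : a₀ ≤ (B - v (-L)) / L := min_le_right _ _
    have h3 : a₀ * L ≤ B - v (-L) := by
      rw [le_div_iff₀ hL] at h2; linarith [h2]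
    nlinarith
  -- intermediate value theorem for φ - ψ
  have ha₀₁ : a₀ ≤ a₁ := le_trans ha₀0 ha₁0
  have hivt : (0:ℝ) ∈ (fun a => φ a - ψ a) '' Icc a₀ a₁ := by
    apply intermediate_value_Icc ha₀₁ (hφc.sub hψc).continuousOn
    have h1 : (fun a => φ a - ψ a) a₀ ≤ 0 := by show φ a₀ - ψ a₀ ≤ 0; linarith
    have h2 : (0:ℝ) ≤ (fun a => φ a - ψ a) a₁ := by show (0:ℝ) ≤ φ a₁ - ψ a₁; linarith
    exact ⟨h1, h2⟩
  obtain ⟨a, _, hfa⟩ := hivt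
  have hfa' : φ a - ψ a = 0 := hfa
  have hab : φ a = ψ a := by linarith
  -- attaining points
  obtain ⟨M, hM, hMval⟩ := inf_attained v hv _ hKm hnem a
  obtain ⟨N, hN, hNval⟩ := inf_attained v hv _ hKp hnep a
  have hMval' : φ a = v M - a * M := hMval
  have hNval' : ψ a = v N - a * N := hNval
  set b : ℝ := φ a with hb
  have hvM : v M = a * M + b := by rw [hb]; linarith
  have hvN : v N = a * N + b := by rw [hb]; linarith
  -- the affine function lies below v on [-L, L]
  have hline : ∀ x ∈ Icc (-L) L, a * x + b ≤ v x := by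
    intro x hx
    rcases le_or_gt x 0 with h | h
    · have h' : φ a ≤ v x - a * x := inf_le_of_mem v hv _ hKm a x ⟨hx.1, h⟩
      rw [hb]; linarith
    · have h' : ψ a ≤ v x - a * x := inf_le_of_mem v hv _ hKp a x ⟨h.le, hx.2⟩
      rw [hb]; linarith
  -- define d
  set d : ℝ := N / (N - M) with hd
  have hM0 : M ≤ 0 := hM.2
  have hN0 : 0 ≤ N := hN.1
  have hNM : 0 ≤ N - M := by linarith
  refine ⟨M, N, d, ⟨hM.1, le_trans hM.2 h0L⟩, ⟨le_trans hL0 hN.1, hN.2⟩, ?_, ?_, ?_⟩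
  · -- d ∈ [0, 1]
    rcases eq_or_lt_of_le hNM with heq | hlt
    · have : d = 0 := by rw [hd, ← heq, div_zero]
      rw [this]; exact ⟨le_refl _, zero_le_one⟩
    · constructor
      · exact div_nonneg hN0 hNM
      · rw [hd, div_le_one hlt]; linarith
  · -- zero mean
    rcases eq_or_lt_of_le hNM with heq | hlt
    · have hdz : d = 0 := by rw [hd, ← heq, div_zero]
      have hNz : N = 0 := le_antisymm (by linarith) hN0
      rw [hdz, hNz]; ring
    · rw [hd]; field_simp; ring
  · -- the main inequality
    have hcomb : d * M + (1 - d) * N = 0 := by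
      rcases eq_or_lt_of_le hNM with heq | hlt
      · have hdz : d = 0 := by rw [hd, ← heq, div_zero]
        have hNz : N = 0 := le_antisymm (by linarith) hN0
        rw [hdz, hNz]; ring
      · rw [hd]; field_simp; ring
    have hval : d * v M + (1 - d) * v N = b := by
      rw [hvM, hvN]; linear_combination a * hcomb
    rw [hval]
    -- integrability
    have hfmem : ∀ t ∈ Icc (0:ℝ) T, f t ∈ Icc (-L) L := by
      intro t ht; exact abs_le.1 (hbound t ht)
    have hfint : IntervalIntegrable f volume 0 T := by
      rw [intervalIntegrable_iff_integrableOn_Ioc_of_le hT.le]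
      apply Integrable.mono' (g := fun _ => L)
        (integrableOn_const measure_Ioc_lt_top.ne)
        hf.aestronglyMeasurable.restrict
      filter_upwards [ae_restrict_mem measurableSet_Ioc] with t ht
      rw [Real.norm_eq_abs]
      exact hbound t (Ioc_subset_Icc_self ht)
    obtain ⟨C, hC⟩ := isCompact_Icc.exists_bound_of_continuousOn
        (s := Icc (-L) L) hv.continuousOn
    have hvfint : IntervalIntegrable (fun t => v (f t)) volume 0 T := by
      rw [intervalIntegrable_iff_integrableOn_Ioc_of_le hT.le]
      apply Integrable.mono' (g := fun _ => C)
        (integrableOn_const measure_Ioc_lt_top.ne)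
        ((hv.measurable.comp hf).aestronglyMeasurable.restrict)
      filter_upwards [ae_restrict_mem measurableSet_Ioc] with t ht
      exact hC (f t) (hfmem t (Ioc_subset_Icc_self ht))
    have haffint : IntervalIntegrable (fun t => a * f t + b) volume 0 T :=
      (hfint.const_mul a).add intervalIntegrable_const
    have hmono : (∫ t in (0:ℝ)..T, (a * f t + b)) ≤ ∫ t in (0:ℝ)..T, v (f t) := by
      apply intervalIntegral.integral_mono_on hT.le haffint hvfint
      intro t ht
      exact hline (f t) (hfmem t ht)
    have hcalc : (∫ t in (0:ℝ)..T, (a * f t + b)) = T * b := by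
      rw [intervalIntegral.integral_add (hfint.const_mul a) intervalIntegrable_const,
        intervalIntegral.integral_const_mul, hmean, intervalIntegral.integral_const]
      simp [mul_comm]
    linarith [hcalc ▸ hmono]
end

section
/- Let v : ℝ → ℝ be any function, let n ≥ 1, let w₁, …, wₙ be positive reals with w₁ + ⋯ + wₙ = 1, and let y₁, …, yₙ be reals with ∑ᵢ wᵢ·yᵢ = 0. Then there exist indices i, j ∈ {1, …, n} and d ∈ [0, 1] such that d·yᵢ + (1 − d)·yⱼ = 0 and d·v(yᵢ) + (1 − d)·v(yⱼ) ≥ ∑ᵢ wᵢ·v(yᵢ). That is, for a discretised force taking values y₁, …, yₙ for fractions w₁, …, wₙ of the period, a dichotomous force whose two values are chosen from among the yᵢ and which still has zero mean achieves at least as large a weighted average of v. -/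
/-- Discrete version: for a force taking values `y i` for fractions `w i` of the period
with zero mean, a dichotomous force whose two values are chosen from among the `y i`,
still with zero mean, achieves at least as large a weighted average of `v`. -/
theorem discrete_dichotomous_maximises (v : ℝ → ℝ) (n : ℕ) (hn : 1 ≤ n)
    (w : Fin n → ℝ) (hw : ∀ i, 0 < w i) (hsum : ∑ i, w i = 1)
    (y : Fin n → ℝ) (hmean : ∑ i, w i * y i = 0) :
    ∃ (i j : Fin n) (d : ℝ), d ∈ Set.Icc (0:ℝ) 1 ∧
      d * y i + (1 - d) * y j = 0 ∧
      d * v (y i) + (1 - d) * v (y j) ≥ ∑ i, w i * v (y i) := by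
  by_cases hz : ∀ k, y k = 0
  · refine ⟨⟨0, hn⟩, ⟨0, hn⟩, 1, ⟨zero_le_one, le_refl 1⟩, by simp [hz], ?_⟩
    have hS : ∑ i, w i * v (y i) = v 0 := by
      have : ∀ i ∈ Finset.univ, w i * v (y i) = w i * v 0 := fun i _ => by rw [hz]
      rw [Finset.sum_congr rfl this, ← Finset.sum_mul, hsum, one_mul]
    rw [hS, hz]
    norm_num
  · push_neg at hz
    obtain ⟨k0, hk0⟩ := hz
    -- there is a strictly positive and a strictly negative value
    have hP : ∃ j, 0 < y j := by
      by_contra h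
      push_neg at h
      have hk0' : y k0 < 0 := lt_of_le_of_ne (h k0) hk0
      have hlt : ∑ i, w i * y i < ∑ i : Fin n, (0:ℝ) :=
        Finset.sum_lt_sum (fun i _ => mul_nonpos_of_nonneg_of_nonpos (hw i).le (h i))
          ⟨k0, Finset.mem_univ k0, mul_neg_of_pos_of_neg (hw k0) hk0'⟩
      simp at hlt
      linarith [hmean]
    obtain ⟨j0, hj0⟩ := hP
    have hN : ∃ i, y i < 0 := by
      by_contra h
      push_neg at h
      have hlt : ∑ i : Fin n, (0:ℝ) < ∑ i, w i * y i :=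
        Finset.sum_lt_sum (fun i _ => mul_nonneg (hw i).le (h i))
          ⟨j0, Finset.mem_univ j0, mul_pos (hw j0) hj0⟩
      simp at hlt
      linarith [hmean]
    obtain ⟨i0, hi0⟩ := hN
    -- maximize chord value over pairs
    set PN : Finset (Fin n × Fin n) :=
      (Finset.univ.filter fun i => y i < 0) ×ˢ (Finset.univ.filter fun j => 0 < y j) with hPN
    have hPNne : PN.Nonempty := ⟨(i0, j0), by
      simp [hPN, Finset.mem_product, hi0, hj0]⟩
    obtain ⟨⟨i, j⟩, hmem, hmax⟩ := PN.exists_max_image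
      (fun p => (y p.2 * v (y p.1) - y p.1 * v (y p.2)) / (y p.2 - y p.1)) hPNne
    have hyi : y i < 0 := by
      have := (Finset.mem_product.mp hmem).1; simpa using this
    have hyj : 0 < y j := by
      have := (Finset.mem_product.mp hmem).2; simpa using this
    have hden : 0 < y j - y i := by linarith
    set V1 : ℝ := (y j * v (y i) - y i * v (y j)) / (y j - y i) with hV1
    have E : V1 * (y j - y i) = y j * v (y i) - y i * v (y j) :=
      div_mul_cancel₀ _ hden.ne'
    set a : ℝ := (v (y i) - V1) / (y i) with hadef
    have ha : a * y i = v (y i) - V1 := div_mul_cancel₀ _ (ne_of_lt hyi)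
    -- key bound
    have keybound : ∀ B : ℝ, V1 ≤ B → (∀ k, y k = 0 → v (y k) ≤ B) →
        ∑ i, w i * v (y i) ≤ B := by
      intro B hB hzero
      have hptwise : ∀ k, v (y k) ≤ a * y k + B := by
        intro k
        rcases lt_trichotomy (y k) 0 with hk | hk | hk
        · -- y k < 0 : use pair (k, j)
          have hmem' : (k, j) ∈ PN := by
            simp [hPN, Finset.mem_product, hk, hyj]
          have hm := hmax (k, j) hmem'
          have hdkj : 0 < y j - y k := by linarith
          have hm' : y j * v (y k) - y k * v (y j) ≤ V1 * (y j - y k) :=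
            (div_le_iff₀ hdkj).mp hm
          have expand : y j * (y i * (a * y k + V1 - v (y k))) =
              (-y k) * (V1 * (y j - y i) - (y j * v (y i) - y i * v (y j)))
              + (-y i) * ((y j * v (y k) - y k * v (y j)) - V1 * (y j - y k))
              + y j * y k * (a * y i - (v (y i) - V1)) := by ring
          have h5 : y j * (y i * (a * y k + V1 - v (y k))) ≤ 0 := by
            rw [expand, E, ha]
            have h6 : (-y i) * ((y j * v (y k) - y k * v (y j)) - V1 * (y j - y k)) ≤ 0 :=
              mul_nonpos_of_nonneg_of_nonpos (by linarith) (by linarith)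
            linarith
          have hX : 0 ≤ a * y k + V1 - v (y k) := by
            by_contra hX
            push_neg at hX
            have : 0 < y j * (y i * (a * y k + V1 - v (y k))) :=
              mul_pos hyj (mul_pos_of_neg_of_neg hyi hX)
            linarith
          linarith
        · -- y k = 0
          have h7 := hzero k hk
          rw [hk] at h7 ⊢
          simpa using h7
        · -- y k > 0 : use pair (i, k)
          have hmem' : (i, k) ∈ PN := by
            simp [hPN, Finset.mem_product, hk, hyi]
          have hm := hmax (i, k) hmem'
          have hdik : 0 < y k - y i := by linarith
          have hm' : y k * v (y i) - y i * v (y k) ≤ V1 * (y k - y i) :=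
            (div_le_iff₀ hdik).mp hm
          have expand : y i * (a * y k + V1 - v (y k)) =
              ((y k * v (y i) - y i * v (y k)) - V1 * (y k - y i))
              + y k * (a * y i - (v (y i) - V1)) := by ring
          have h5 : y i * (a * y k + V1 - v (y k)) ≤ 0 := by
            rw [expand, ha]; linarith
          have hX : 0 ≤ a * y k + V1 - v (y k) := by
            by_contra hX
            push_neg at hX
            have : 0 < y i * (a * y k + V1 - v (y k)) :=
              mul_pos_of_neg_of_neg hyi hX
            linarith
          linarith
      calc ∑ k, w k * v (y k) ≤ ∑ k, w k * (a * y k + B) :=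
            Finset.sum_le_sum fun k _ =>
              mul_le_mul_of_nonneg_left (hptwise k) (hw k).le
        _ = a * ∑ k, w k * y k + B * ∑ k, w k := by
            rw [Finset.mul_sum, Finset.mul_sum, ← Finset.sum_add_distrib]
            exact Finset.sum_congr rfl fun k _ => by ring
        _ = B := by rw [hmean, hsum]; ring
    -- final assembly
    by_cases hc : ∃ k, y k = 0 ∧ V1 < v (y k)
    · obtain ⟨k1, hk1, hk1v⟩ := hc
      have hZne : (Finset.univ.filter fun k => y k = 0).Nonempty :=
        ⟨k1, by simp [hk1]⟩
      obtain ⟨k2, hk2mem, hk2max⟩ :=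
        (Finset.univ.filter fun k => y k = 0).exists_max_image (fun k => v (y k)) hZne
      have hk2z : y k2 = 0 := by simpa using hk2mem
      have hk1le : v (y k1) ≤ v (y k2) := hk2max k1 (by simp [hk1])
      refine ⟨k2, k2, 1, ⟨zero_le_one, le_refl 1⟩, by rw [hk2z]; ring, ?_⟩
      have hS := keybound (v (y k2)) (by linarith)
        (fun k hk => hk2max k (by simp [hk]))
      calc (1:ℝ) * v (y k2) + (1 - 1) * v (y k2) = v (y k2) := by ring
        _ ≥ ∑ i, w i * v (y i) := hS
    · push_neg at hc
      have hS := keybound V1 le_rfl (fun k hk => hc k hk)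
      refine ⟨i, j, y j / (y j - y i), ⟨?_, ?_⟩, ?_, ?_⟩
      · exact div_nonneg hyj.le hden.le
      · rw [div_le_one hden]; linarith
      · field_simp
        ring
      · have hval : y j / (y j - y i) * v (y i) + (1 - y j / (y j - y i)) * v (y j) = V1 := by
          rw [hV1]
          field_simp
          ring
        rw [hval]
        exact hS
end

section
/- Let v : ℝ → ℝ be any function and let y₁, y₂, y₃ be any real numbers. Then there exist indices i ≠ j in {1, 2, 3} and nonnegative reals wᵢ, wⱼ with wᵢ + wⱼ = 3, wᵢ·yᵢ + wⱼ·yⱼ = y₁ + y₂ + y₃, and wᵢ·v(yᵢ) + wⱼ·v(yⱼ) ≥ v(y₁) + v(y₂) + v(y₃). That is, any three equal-length force segments can be replaced by segments taking only two of the three values, preserving total length and total (mean) force, without decreasing the total contribution to the average velocity. -/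
private lemma key_three (v : ℝ → ℝ) (a b c : ℝ) (hab : a ≤ b) (hbc : b ≤ c) :
    ∃ x z wi wj : ℝ, ((x = a ∧ z = c) ∨ (x = b ∧ z = c) ∨ (x = b ∧ z = a)) ∧
      0 ≤ wi ∧ 0 ≤ wj ∧ wi + wj = 3 ∧ wi * x + wj * z = a + b + c ∧
      wi * v x + wj * v z ≥ v a + v b + v c := by
  rcases eq_or_lt_of_le hab with h | h
  · subst h
    exact ⟨a, c, 2, 1, Or.inl ⟨rfl, rfl⟩, by norm_num, by norm_num, by norm_num,
      by ring, by nlinarith⟩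
  rcases eq_or_lt_of_le hbc with h2 | h2
  · subst h2
    exact ⟨a, b, 1, 2, Or.inl ⟨rfl, rfl⟩, by norm_num, by norm_num, by norm_num,
      by ring, by nlinarith⟩
  have hca : (0:ℝ) < c - a := by linarith
  set t : ℝ := (c - b) / (c - a) with hts
  have ht0 : 0 < t := div_pos (by linarith) hca
  have ht1 : t < 1 := (div_lt_one hca).2 (by linarith)
  have ht : t * (c - a) = c - b := div_mul_cancel₀ _ (ne_of_gt hca)
  by_cases hv : v b ≤ t * v a + (1 - t) * v c
  · refine ⟨a, c, 1 + t, 2 - t, Or.inl ⟨rfl, rfl⟩, by linarith, by linarith, by ring,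
      by linear_combination -ht, ?_⟩
    nlinarith [hv]
  · push_neg at hv
    by_cases hm : (1:ℝ)/2 ≤ t
    · refine ⟨b, c, (1 + t) / t, (2 * t - 1) / t, Or.inr (Or.inl ⟨rfl, rfl⟩),
        div_nonneg (by linarith) ht0.le, div_nonneg (by linarith) ht0.le, ?_, ?_, ?_⟩
      · field_simp
        ring
      · rw [div_mul_eq_mul_div, div_mul_eq_mul_div, ← add_div,
          div_eq_iff (ne_of_gt ht0)]
        linear_combination ht
      · have key2 : t * (v a + v b + v c) ≤ (1 + t) * v b + (2 * t - 1) * v c := by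
          nlinarith [hv]
        rw [ge_iff_le, div_mul_eq_mul_div, div_mul_eq_mul_div, ← add_div,
          le_div_iff₀ ht0]
        linarith [key2]
    · push_neg at hm
      have h1t : 0 < 1 - t := by linarith
      refine ⟨b, a, (2 - t) / (1 - t), (1 - 2 * t) / (1 - t), Or.inr (Or.inr ⟨rfl, rfl⟩),
        div_nonneg (by linarith) h1t.le, div_nonneg (by linarith) h1t.le, ?_, ?_, ?_⟩
      · field_simp
        ring
      · rw [div_mul_eq_mul_div, div_mul_eq_mul_div, ← add_div,
          div_eq_iff (ne_of_gt h1t)]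
        linear_combination ht
      · have key2 : (1 - t) * (v a + v b + v c) ≤ (2 - t) * v b + (1 - 2 * t) * v a := by
          nlinarith [hv]
        rw [ge_iff_le, div_mul_eq_mul_div, div_mul_eq_mul_div, ← add_div,
          le_div_iff₀ h1t]
        linarith [key2]

private lemma main_aux (v : ℝ → ℝ) (y : Fin 3 → ℝ) (p q r : Fin 3)
    (hpq : p ≠ q) (hpr : p ≠ r) (hqr : q ≠ r)
    (h1 : y p ≤ y q) (h2 : y q ≤ y r)
    (hsum : y p + y q + y r = y 0 + y 1 + y 2)
    (hv : v (y p) + v (y q) + v (y r) = v (y 0) + v (y 1) + v (y 2)) :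
    ∃ (i j : Fin 3), i ≠ j ∧ ∃ wi wj : ℝ, 0 ≤ wi ∧ 0 ≤ wj ∧
      wi + wj = 3 ∧
      wi * y i + wj * y j = y 0 + y 1 + y 2 ∧
      wi * v (y i) + wj * v (y j) ≥ v (y 0) + v (y 1) + v (y 2) := by
  obtain ⟨x, z, wi, wj, hxz, hw1, hw2, hw3, hw4, hw5⟩ :=
    key_three v (y p) (y q) (y r) h1 h2
  rcases hxz with ⟨hx, hz⟩ | ⟨hx, hz⟩ | ⟨hx, hz⟩
  · exact ⟨p, r, hpr, wi, wj, hw1, hw2, hw3,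
      by rw [← hx, ← hz]; linarith, by rw [← hx, ← hz]; linarith⟩
  · exact ⟨q, r, hqr, wi, wj, hw1, hw2, hw3,
      by rw [← hx, ← hz]; linarith, by rw [← hx, ← hz]; linarith⟩
  · exact ⟨q, p, hpq.symm, wi, wj, hw1, hw2, hw3,
      by rw [← hx, ← hz]; linarith, by rw [← hx, ← hz]; linarith⟩

/-- Any three equal-length force segments with values `y 0, y 1, y 2` can be replaced by
segments taking only two of the three values, preserving total length (weights summing
to 3) and total force, without decreasing the total contribution to the average velocity. -/
theorem three_segments_to_two (v : ℝ → ℝ) (y : Fin 3 → ℝ) :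
    ∃ (i j : Fin 3), i ≠ j ∧ ∃ wi wj : ℝ, 0 ≤ wi ∧ 0 ≤ wj ∧
      wi + wj = 3 ∧
      wi * y i + wj * y j = y 0 + y 1 + y 2 ∧
      wi * v (y i) + wj * v (y j) ≥ v (y 0) + v (y 1) + v (y 2) := by
  rcases le_total (y 0) (y 1) with h01 | h01 <;>
    rcases le_total (y 1) (y 2) with h12 | h12 <;>
    rcases le_total (y 0) (y 2) with h02 | h02
  · exact main_aux v y 0 1 2 (by decide) (by decide) (by decide) h01 h12 (by ring) (by ring)
  · exact main_aux v y 0 1 2 (by decide) (by decide) (by decide) h01 h12 (by ring) (by ring)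
  · exact main_aux v y 0 2 1 (by decide) (by decide) (by decide) h02 h12 (by ring) (by ring)
  · exact main_aux v y 2 0 1 (by decide) (by decide) (by decide) h02 h01 (by ring) (by ring)
  · exact main_aux v y 1 0 2 (by decide) (by decide) (by decide) h01 h02 (by ring) (by ring)
  · exact main_aux v y 1 2 0 (by decide) (by decide) (by decide) h12 h02 (by ring) (by ring)
  · exact main_aux v y 2 1 0 (by decide) (by decide) (by decide) h12 h01 (by ring) (by ring)
  · exact main_aux v y 2 1 0 (by decide) (by decide) (by decide) h12 h01 (by ring) (by ring)
end

section
/- Let v : ℝ → ℝ be any function, let f₁, f₂, f₃ be reals with f₁ ≠ f₂ and f₃ ≠ f₂, let dt > 0, and let t₁′, t₂′ be reals satisfying t₁′ + t₂′ = 3·dt and f₁·t₁′ + f₂·t₂′ = (f₁ + f₂ + f₃)·dt. Then v(f₁)·t₁′ + v(f₂)·t₂′ − [v(f₁) + v(f₂) + v(f₃)]·dt = dt·(f₃ − f₂)·(m(f₂, f₁) − m(f₂, f₃)), where m(a, b) := (v(b) − v(a))/(b − a). -/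
/-- The change in (period-scaled) contribution to the average velocity when three equal
segments with values `f₁, f₂, f₃` are replaced by intervals of lengths `t₁', t₂'` at values
`f₁, f₂` equals `dt·(f₃ − f₂)·(m(f₂,f₁) − m(f₂,f₃))`, where `m a b = (v b − v a)/(b − a)`. -/
theorem velocity_change_formula (v : ℝ → ℝ) (f₁ f₂ f₃ dt t₁' t₂' : ℝ)
    (h₁₂ : f₁ ≠ f₂) (h₃₂ : f₃ ≠ f₂) (hdt : 0 < dt)
    (hlen : t₁' + t₂' = 3 * dt)
    (hmean : f₁ * t₁' + f₂ * t₂' = (f₁ + f₂ + f₃) * dt) :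
    v f₁ * t₁' + v f₂ * t₂' - (v f₁ + v f₂ + v f₃) * dt =
      dt * (f₃ - f₂) * ((v f₁ - v f₂) / (f₁ - f₂) - (v f₃ - v f₂) / (f₃ - f₂)) := by
  have h1 : f₁ - f₂ ≠ 0 := sub_ne_zero.mpr h₁₂
  have h3 : f₃ - f₂ ≠ 0 := sub_ne_zero.mpr h₃₂
  have ht1 : t₁' = dt * (f₁ + f₃ - 2 * f₂) / (f₁ - f₂) := by
    have ht2 : t₂' = 3 * dt - t₁' := by linarith
    rw [ht2] at hmean
    field_simp
    nlinarith [hmean]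
  have ht2 : t₂' = 3 * dt - t₁' := by linarith
  rw [ht1, ht2, ht1]
  field_simp
  ring
end

section
/- Let v : ℝ → ℝ be twice differentiable, let M be real, let d₀ ∈ (0, 1), and set N₀ := −M·d₀/(1 − d₀). Then the function F(d) := d·v(M) + (1 − d)·v(−M·d/(1 − d)) is twice differentiable at d₀ with F″(d₀) = [M·(M − N₀)/(1 − d₀)²]·v″(N₀). In particular, for M > 0 the sign of F″(d₀) equals the sign of v″(N₀), so the type of a stationary duty cycle (maximum or minimum of ratchet velocity) is determined by the sign of v″ at the negative force value. -/
/-- Second derivative of the dichotomous ratchet velocity with respect to the duty cycle: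
`F d = d·v M + (1−d)·v(−M·d/(1−d))` is twice differentiable at `d₀ ∈ (0,1)` with
`F'' d₀ = [M·(M − N₀)/(1−d₀)²]·v'' N₀`, where `N₀ = −M·d₀/(1−d₀)`; for `M > 0` the sign
of `F'' d₀` equals the sign of `v'' N₀`. -/
theorem duty_cycle_second_derivative (v : ℝ → ℝ)
    (hv : Differentiable ℝ v) (hv' : Differentiable ℝ (deriv v))
    (M d₀ : ℝ) (hd : d₀ ∈ Set.Ioo (0:ℝ) 1)
    (N₀ : ℝ) (hN₀ : N₀ = -M * d₀ / (1 - d₀)) :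
    DifferentiableAt ℝ (fun d : ℝ => d * v M + (1 - d) * v (-M * d / (1 - d))) d₀ ∧
    DifferentiableAt ℝ
      (deriv (fun d : ℝ => d * v M + (1 - d) * v (-M * d / (1 - d)))) d₀ ∧
    deriv (deriv (fun d : ℝ => d * v M + (1 - d) * v (-M * d / (1 - d)))) d₀ =
      M * (M - N₀) / (1 - d₀) ^ 2 * deriv (deriv v) N₀ ∧
    (0 < M →
      Real.sign (deriv (deriv
          (fun d : ℝ => d * v M + (1 - d) * v (-M * d / (1 - d)))) d₀) =
        Real.sign (deriv (deriv v) N₀)) := by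
  obtain ⟨hd0, hd1⟩ := hd
  have h1 : (0:ℝ) < 1 - d₀ := by linarith
  have h1' : (1:ℝ) - d₀ ≠ 0 := ne_of_gt h1
  set g : ℝ → ℝ := fun d => -M * d / (1 - d) with hg
  set F : ℝ → ℝ := fun d : ℝ => d * v M + (1 - d) * v (-M * d / (1 - d)) with hF
  set F' : ℝ → ℝ := fun x => v M - v (g x) - M * (deriv v (g x) * (1 - x)⁻¹) with hF'
  have hgd : ∀ x : ℝ, x ≠ 1 → HasDerivAt g (-M / (1 - x) ^ 2) x := by
    intro x hx
    have hx' : 1 - x ≠ 0 := by intro h; apply hx; linarith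
    have h := (((hasDerivAt_id x).const_mul (-M)).div
      ((hasDerivAt_id x).const_sub 1) hx')
    convert h using 1
    · rfl
    · rfl
    · rfl
    simp only [id]
    field_simp
    ring
  have hFd : ∀ x : ℝ, x ≠ 1 → HasDerivAt F (F' x) x := by
    intro x hx
    have hx' : 1 - x ≠ 0 := by intro h; apply hx; linarith
    have hvg : HasDerivAt (fun d => v (g d)) (deriv v (g x) * (-M / (1 - x) ^ 2)) x :=
      (hv (g x)).hasDerivAt.comp x (hgd x hx)
    have h := ((hasDerivAt_id x).mul_const (v M)).add
      (((hasDerivAt_id x).const_sub 1).mul hvg)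
    convert h using 1
    · rfl
    · rfl
    · rfl
    simp only [hF', id]
    field_simp
    ring
  have heq : deriv F =ᶠ[nhds d₀] F' := by
    filter_upwards [Iio_mem_nhds hd1] with x hx
    exact (hFd x (ne_of_lt hx)).deriv
  have hgd₀ : g d₀ = N₀ := by rw [hN₀]
  have hF'd : HasDerivAt F'
      (0 - deriv v (g d₀) * (-M / (1 - d₀) ^ 2) -
        M * ((deriv (deriv v) (g d₀) * (-M / (1 - d₀) ^ 2)) * (1 - d₀)⁻¹ +
          deriv v (g d₀) * (-(-1) / (1 - d₀) ^ 2))) d₀ := by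
    have hvg : HasDerivAt (fun d => v (g d)) (deriv v (g d₀) * (-M / (1 - d₀) ^ 2)) d₀ :=
      (hv (g d₀)).hasDerivAt.comp d₀ (hgd d₀ (by linarith))
    have hdvg : HasDerivAt (fun d => deriv v (g d))
        (deriv (deriv v) (g d₀) * (-M / (1 - d₀) ^ 2)) d₀ :=
      (hv' (g d₀)).hasDerivAt.comp d₀ (hgd d₀ (by linarith))
    have hinv : HasDerivAt (fun x : ℝ => (1 - x)⁻¹) (-(-1) / (1 - d₀) ^ 2) d₀ :=
      ((hasDerivAt_id d₀).const_sub 1).inv h1'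
    exact ((hasDerivAt_const d₀ (v M)).sub hvg).sub ((hdvg.mul hinv).const_mul M)
  have hderiv2 : deriv (deriv F) d₀ = M * (M - N₀) / (1 - d₀) ^ 2 * deriv (deriv v) N₀ := by
    rw [heq.deriv_eq, hF'd.deriv, hgd₀, hN₀]
    field_simp
    ring
  have hdiff1 : DifferentiableAt ℝ F d₀ := (hFd d₀ (by linarith)).differentiableAt
  have hdiff2 : DifferentiableAt ℝ (deriv F) d₀ :=
    hF'd.differentiableAt.congr_of_eventuallyEq heq
  refine ⟨hdiff1, hdiff2, hderiv2, fun hM => ?_⟩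
  rw [hderiv2]
  have hc : 0 < M * (M - N₀) / (1 - d₀) ^ 2 := by
    have hMN : M - N₀ = M / (1 - d₀) := by rw [hN₀]; field_simp; ring
    rw [hMN]
    positivity
  rcases lt_trichotomy (deriv (deriv v) N₀) 0 with h | h | h
  · rw [Real.sign_of_neg h, Real.sign_of_neg (mul_neg_of_pos_of_neg hc h)]
  · rw [h, mul_zero]
  · rw [Real.sign_of_pos h, Real.sign_of_pos (mul_pos hc h)]
end

section
/- For every k > 0 and every y ∈ ℝ, the double integral D(y) := ∫₀^{2π} ∫ₓ^{x+2π} exp[(cos z − cos x − (z − x)·y)/k] dz dx satisfies the identity D(−y) = exp(2πy/k)·D(y). -/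
open Real intervalIntegral in
private lemma inner_shift (k : ℝ) (y x : ℝ) :
    (∫ z in x..(x + 2 * π), exp ((cos z - cos x - (z - x) * y) / k)) =
      ∫ u in (0:ℝ)..(2 * π), exp ((cos (u + x) - cos x - u * y) / k) := by
  have h := intervalIntegral.integral_comp_add_right
      (a := (0:ℝ)) (b := 2 * π)
      (f := fun z => exp ((cos z - cos x - (z - x) * y) / k)) x
  simp only [zero_add] at h
  rw [show x + 2 * π = 2 * π + x by ring, ← h]
  refine intervalIntegral.integral_congr fun u _ => ?_
  rw [show u + x - x = u by ring]

open Real in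
private lemma G_periodic (k y : ℝ) :
    Function.Periodic
      (fun w => ∫ u in (0:ℝ)..(2 * π), exp ((cos (u + w) - cos w - u * y) / k))
      (2 * π) := by
  intro w
  refine intervalIntegral.integral_congr fun u _ => ?_
  rw [show u + (w + 2 * π) = (u + w) + 2 * π by ring, Real.cos_add_two_pi,
    Real.cos_add_two_pi]

open Real in
/-- Symmetry of the denominator of the adiabatic response function for the even
potential `V x = cos x`: `D(−y) = exp(2πy/k)·D(y)`. -/
theorem denominator_symmetry (k : ℝ) (hk : 0 < k) (y : ℝ) :
    (∫ x in (0:ℝ)..(2 * π),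
        ∫ z in x..(x + 2 * π), exp ((cos z - cos x - (z - x) * (-y)) / k)) =
      exp (2 * π * y / k) *
        ∫ x in (0:ℝ)..(2 * π),
          ∫ z in x..(x + 2 * π), exp ((cos z - cos x - (z - x) * y) / k) := by
  set c := exp (2 * π * y / k) with hc
  -- rewrite both sides via the shift z = u + x
  simp only [inner_shift]
  -- Step: transform the inner integral of the LHS
  have step1 : ∀ x : ℝ,
      (∫ u in (0:ℝ)..(2 * π), exp ((cos (u + x) - cos x - u * (-y)) / k)) =
        c * ∫ u in (0:ℝ)..(2 * π), exp ((cos (u + (-x)) - cos (-x) - u * y) / k) := by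
    intro x
    have h := intervalIntegral.integral_comp_sub_left
        (a := (0:ℝ)) (b := 2 * π)
        (f := fun u => exp ((cos (u + x) - cos x - u * (-y)) / k)) (2 * π)
    simp only [sub_self, sub_zero] at h
    rw [← h]
    rw [← intervalIntegral.integral_const_mul]
    refine intervalIntegral.integral_congr fun u _ => ?_
    have hcos : cos (2 * π - u + x) = cos (u + -x) := by
      rw [show 2 * π - u + x = -(u + -x) + 2 * π by ring, Real.cos_add_two_pi,
        Real.cos_neg]
    rw [hcos, Real.cos_neg, hc, ← Real.exp_add]
    congr 1
    ring
  simp only [step1]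
  rw [intervalIntegral.integral_const_mul]
  refine congrArg (c * ·) ?_
  -- now: ∫ x in 0..2π, G(-x) = ∫ x in 0..2π, G x  where G is periodic
  have h := intervalIntegral.integral_comp_neg
      (a := (0:ℝ)) (b := 2 * π)
      (f := fun w => ∫ u in (0:ℝ)..(2 * π), exp ((cos (u + w) - cos w - u * y) / k))
  rw [h, neg_zero]
  have hp := (G_periodic k y).intervalIntegral_add_eq (-(2 * π)) 0
  simp only [zero_add] at hp
  rw [show -(2 * π) + 2 * π = 0 by ring] at hp
  exact hp
end
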